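/- Let X2− ∈ ℝ^{n×τ} have full row rank and let F ∈ ℝ^{n×τ}. If X2− has a right inverse X2−† such that F·X2−† is stable, then there exists Θ ∈ ℝ^{τ×n} with X2−·Θ symmetric, the block matrix [[X2−·Θ, F·Θ],[Θᵀ·Fᵀ, X2−·Θ]] positive definite, and X2−† relates to Θ via F·(Θ·(X2−·Θ)⁻¹) being stable. -/

import Mathlib

/-!
Write `A := F * Xd`. Stability bounds the spectral radius of `A` by `1`, so Gelfand's formula
gives `‖A ^ k‖ < 1` for some `k > 0` (L2 operator norm of the complexification). The truncated
Lyapunov series `P := ∑_{j<k} A ^ j * (A ^ j)ᵀ` is positive definite and telescopes to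
`P - A * P * Aᵀ = 1 - A ^ k * (A ^ k)ᵀ ≻ 0`. Take `Θ := Xd * P`: then `X2m * Θ = P`,
`F * Θ = A * P`, the Schur complement of the lower right block of the block matrix is
`P - A * P * Aᵀ`, and `Θ * (X2m * Θ)⁻¹ = Xd`.
-/

open Matrix

def IsStable {n : Type*} [Fintype n] [DecidableEq n] (M : Matrix n n ℝ) : Prop :=
  ∀ μ ∈ spectrum ℂ (M.map (algebraMap ℝ ℂ)), ‖μ‖ < 1

open Filter
open scoped ENNReal NNReal ComplexOrder

theorem spectralRadius_lt_one_of_forall_norm_lt_one {A : Type*} [NormedRing A]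
    [NormedAlgebra ℂ A] [CompleteSpace A] {a : A} (h : ∀ μ ∈ spectrum ℂ a, ‖μ‖ < 1) :
    spectralRadius ℂ a < 1 := by
  rcases (spectrum ℂ a).eq_empty_or_nonempty with hempty | hne
  · simp [spectralRadius, hempty]
  · exact_mod_cast spectrum.spectralRadius_lt_of_forall_lt_of_nonempty hne
      fun μ hμ => (by exact_mod_cast h μ hμ : ‖μ‖₊ < 1)

theorem exists_pow_norm_lt_one_of_spectralRadius_lt_one {A : Type*} [NormedRing A]
    [NormedAlgebra ℂ A] [CompleteSpace A] {a : A} (h : spectralRadius ℂ a < 1) :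
    ∃ k : ℕ, 0 < k ∧ ‖a ^ k‖ < 1 := by
  obtain ⟨k, hk, hk0⟩ :=
    (((spectrum.pow_nnnorm_pow_one_div_tendsto_nhds_spectralRadius a).eventually_lt_const h).and
      (eventually_gt_atTop 0)).exists
  refine ⟨k, hk0, ?_⟩
  by_contra! hge
  have h1 : (1 : ℝ≥0∞) ≤ ‖a ^ k‖₊ := by exact_mod_cast hge
  exact (ENNReal.one_le_rpow h1 (by positivity)).not_gt hk

namespace Matrix

open scoped Matrix.Norms.L2Operator MatrixOrder in
theorem posDef_one_sub_mul_conjTranspose_of_norm_lt_one {n : Type*} [Fintype n] [DecidableEq n]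
    {C : Matrix n n ℂ} (h : ‖C‖ < 1) : (1 - C * Cᴴ).PosDef := by
  have hle : C * Cᴴ ≤ algebraMap ℝ _ (‖C‖ ^ 2) := CStarAlgebra.mul_star_le_algebraMap_norm_sq
  have hpos : ((1 - ‖C‖ ^ 2 : ℝ) • (1 : Matrix n n ℂ)).PosDef :=
    PosDef.one.smul (by nlinarith [norm_nonneg C])
  convert hpos.add_posSemidef (le_iff.mp hle) using 1
  simp [Algebra.algebraMap_eq_smul_one, sub_smul]

theorem PosDef.of_map_complex {n : Type*} [Fintype n] {M : Matrix n n ℝ}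
    (h : (M.map (algebraMap ℝ ℂ)).PosDef) : M.PosDef := by
  refine .of_dotProduct_mulVec_pos ?_ fun x hx => ?_
  · ext i j
    simpa using congrFun (congrFun h.1 i) j
  · have hx' : (fun i => (x i : ℂ)) ≠ 0 := fun h0 => hx (funext fun i => by
      simpa using congrFun h0 i)
    have key : star (fun i => (x i : ℂ)) ⬝ᵥ (M.map (algebraMap ℝ ℂ) *ᵥ fun i => (x i : ℂ))
        = ((star x ⬝ᵥ (M *ᵥ x) : ℝ) : ℂ) := by
      simp [dotProduct, mulVec]
    exact Complex.zero_lt_real.mp (key ▸ h.dotProduct_mulVec_pos hx')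

theorem PosDef.posDef_fromBlocks₂₂ {𝕜 m n : Type*} [RCLike 𝕜] [Fintype m] [Fintype n]
    [DecidableEq m] [DecidableEq n] {A : Matrix m m 𝕜} (B : Matrix m n 𝕜) {D : Matrix n n 𝕜}
    (hD : D.PosDef) (hS : (A - B * D⁻¹ * Bᴴ).PosDef) : (fromBlocks A B Bᴴ D).PosDef := by
  have := hD.isUnit.invertible
  have : Invertible (A - B * ⅟D * Bᴴ) := by
    rw [invOf_eq_nonsing_inv]
    exact hS.isUnit.invertible
  have := fromBlocks₂₂Invertible A B Bᴴ D
  exact ((PosDef.fromBlocks₂₂ A B hD).mpr hS.posSemidef).posDef_iff_isUnit.mpr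
    (isUnit_of_invertible _)

section Lyapunov

variable {n : Type*} [Fintype n] [DecidableEq n]

theorem sum_pow_mul_transpose_sub_mul_mul_transpose {R : Type*} [CommRing R]
    (A : Matrix n n R) (k : ℕ) :
    (∑ j ∈ Finset.range k, A ^ j * (A ^ j)ᵀ) - A * (∑ j ∈ Finset.range k, A ^ j * (A ^ j)ᵀ) * Aᵀ
      = 1 - A ^ k * (A ^ k)ᵀ := by
  have hshift : A * (∑ j ∈ Finset.range k, A ^ j * (A ^ j)ᵀ) * Aᵀ
      = ∑ j ∈ Finset.range k, A ^ (j + 1) * (A ^ (j + 1))ᵀ := by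
    simp only [Finset.mul_sum, Finset.sum_mul, pow_succ', transpose_mul, Matrix.mul_assoc]
  rw [hshift, ← Finset.sum_sub_distrib, Finset.sum_range_sub' (fun j => A ^ j * (A ^ j)ᵀ)]
  simp

theorem posDef_sum_pow_mul_transpose (A : Matrix n n ℝ) {k : ℕ} (hk : 0 < k) :
    (∑ j ∈ Finset.range k, A ^ j * (A ^ j)ᵀ).PosDef := by
  obtain ⟨k, rfl⟩ := Nat.exists_eq_add_of_lt hk
  rw [Nat.zero_add, Finset.sum_range_succ', pow_zero, transpose_one, Matrix.one_mul]
  refine PosDef.posSemidef_add (posSemidef_sum _ fun j _ => ?_) PosDef.one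
  simpa using posSemidef_self_mul_conjTranspose (A ^ (j + 1))

end Lyapunov

end Matrix

open scoped Matrix.Norms.L2Operator in
theorem IsStable.exists_posDef_sub_mul_mul_transpose {n : Type*} [Fintype n] [DecidableEq n]
    {A : Matrix n n ℝ} (hA : IsStable A) :
    ∃ P : Matrix n n ℝ, P.PosDef ∧ (P - A * P * Aᵀ).PosDef := by
  obtain ⟨k, hk, hnorm⟩ := exists_pow_norm_lt_one_of_spectralRadius_lt_one
    (spectralRadius_lt_one_of_forall_norm_lt_one hA)
  refine ⟨_, posDef_sum_pow_mul_transpose A hk, ?_⟩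
  rw [sum_pow_mul_transpose_sub_mul_mul_transpose]
  refine PosDef.of_map_complex ?_
  have hmap : (1 - A ^ k * (A ^ k)ᵀ).map (algebraMap ℝ ℂ)
      = 1 - A.map (algebraMap ℝ ℂ) ^ k * (A.map (algebraMap ℝ ℂ) ^ k)ᴴ := by
    simp only [← RingHom.mapMatrix_apply, map_sub, map_one, map_mul, map_pow]
    rw [← map_pow]
    congr 2
    ext i j
    simp [-transpose_pow]
  exact hmap ▸ posDef_one_sub_mul_conjTranspose_of_norm_lt_one hnorm

theorem stmt12_general {n τ : ℕ}
    (X2m F : Matrix (Fin n) (Fin τ) ℝ)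
    (Xd : Matrix (Fin τ) (Fin n) ℝ) (hXd : X2m * Xd = 1)
    (hstab : IsStable (F * Xd)) :
    ∃ Θ : Matrix (Fin τ) (Fin n) ℝ,
      (X2m * Θ)ᵀ = X2m * Θ ∧
      (Matrix.fromBlocks (X2m * Θ) (F * Θ) (Θᵀ * Fᵀ) (X2m * Θ)).PosDef ∧
      IsStable (F * (Θ * (X2m * Θ)⁻¹)) := by
  set A := F * Xd
  obtain ⟨P, hP, hLyap⟩ := hstab.exists_posDef_sub_mul_mul_transpose
  have hPdet : IsUnit P.det := (isUnit_iff_isUnit_det P).mp hP.isUnit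
  have hXΘ : X2m * (Xd * P) = P := by rw [← Matrix.mul_assoc, hXd, Matrix.one_mul]
  have hFΘ : F * (Xd * P) = A * P := (Matrix.mul_assoc _ _ _).symm
  refine ⟨Xd * P, ?_, ?_, ?_⟩
  · rw [hXΘ]
    exact hP.1
  · have hΘF : (Xd * P)ᵀ * Fᵀ = (A * P)ᴴ := by
      rw [conjTranspose_eq_transpose_of_trivial, ← transpose_mul, hFΘ]
    have hSchur : P - A * P * P⁻¹ * (A * P)ᴴ = P - A * P * Aᵀ := by
      rw [mul_nonsing_inv_cancel_right _ _ hPdet, conjTranspose_mul, hP.1.eq,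
        conjTranspose_eq_transpose_of_trivial, ← Matrix.mul_assoc]
    rw [hXΘ, hFΘ, hΘF]
    exact hP.posDef_fromBlocks₂₂ _ (hSchur ▸ hLyap)
  · rwa [hXΘ, mul_nonsing_inv_cancel_right _ _ hPdet]

theorem stmt12 {n τ : ℕ}
    (X2m F : Matrix (Fin n) (Fin τ) ℝ)
    (hrank : X2m.rank = n)
    (Xd : Matrix (Fin τ) (Fin n) ℝ) (hXd : X2m * Xd = 1)
    (hstab : IsStable (F * Xd)) :
    ∃ Θ : Matrix (Fin τ) (Fin n) ℝ,
      (X2m * Θ)ᵀ = X2m * Θ ∧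
      (Matrix.fromBlocks (X2m * Θ) (F * Θ) (Θᵀ * Fᵀ) (X2m * Θ)).PosDef ∧
      IsStable (F * (Θ * (X2m * Θ)⁻¹)) :=
  stmt12_general X2m F Xd hXd hstab
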